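/- For λ ∈ (1, 2), the polynomial p_λ(x) = x(λ² - x)(x² + (4/λ - λ²)x + 4/λ²) satisfies p_λ(x) > 0 for all x ∈ (0, 1] and for all x ∈ (0, λ²). -/

import Mathlib

/-- Its discriminant is `l * (l^3 - 8) < 0`. -/
lemma quadratic_factor_pos {l : ℝ} (hl0 : 0 < l) (hl2 : l < 2) (x : ℝ) :
    0 < x^2 + (4/l - l^2)*x + 4/l^2 := by
  have hcube : l^3 < 2^3 := pow_lt_pow_left₀ hl2 hl0.le three_ne_zero
  have hsquare : 4*l^2 * (x^2 + (4/l - l^2)*x + 4/l^2)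
      = (2*l*x + 4 - l^3)^2 + l^3*(2^3 - l^3) := by
    field_simp
    ring
  have hscaled : 0 < 4*l^2 * (x^2 + (4/l - l^2)*x + 4/l^2) := by
    rw [hsquare]
    exact add_pos_of_nonneg_of_pos (sq_nonneg _) (mul_pos (pow_pos hl0 3) (sub_pos.2 hcube))
  exact pos_of_mul_pos_right hscaled (by positivity)

lemma quartic_pos_of_mem_Ioo {l x : ℝ} (hl0 : 0 < l) (hl2 : l < 2) (hx : x ∈ Set.Ioo 0 (l^2)) :
    0 < x * (l^2 - x) * (x^2 + (4/l - l^2)*x + 4/l^2) :=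
  mul_pos (mul_pos hx.1 (sub_pos.2 hx.2)) (quadratic_factor_pos hl0 hl2 x)

theorem stmt_12 (l : ℝ) (hl : l ∈ Set.Ioo (1:ℝ) 2) :
    (∀ x ∈ Set.Ioc (0:ℝ) 1, 0 < x * (l^2 - x) * (x^2 + (4/l - l^2)*x + 4/l^2)) ∧
    (∀ x ∈ Set.Ioo (0:ℝ) (l^2), 0 < x * (l^2 - x) * (x^2 + (4/l - l^2)*x + 4/l^2)) := by
  obtain ⟨hl1, hl2⟩ := hl
  have hl0 : 0 < l := zero_lt_one.trans hl1
  have hsubset : Set.Ioc (0:ℝ) 1 ⊆ Set.Ioo 0 (l^2) :=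
    Set.Ioc_subset_Ioo_right (one_lt_pow₀ hl1 two_ne_zero)
  exact ⟨fun x hx => quartic_pos_of_mem_Ioo hl0 hl2 (hsubset hx),
    fun x hx => quartic_pos_of_mem_Ioo hl0 hl2 hx⟩
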